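/- arXiv:2108.07091 — 6 statements merged into one kernel-verified Lean document; each statement's English description precedes it below -/
import Mathlib

section
/- Let S be a nonempty set, let I be a finite index set, and for each i ∈ I let γᵢ : S → ℝ be a function with γᵢ(x) ≥ 0 for all x ∈ S. Then sup_{x ∈ S} Σ_{i∈I} log(1+γᵢ(x)) = sup_{x ∈ S} sup_{ζ ∈ (ℝ≥0)^I} Σ_{i∈I} F(ζᵢ, γᵢ(x)), and moreover for each fixed x ∈ S the inner supremum over ζ is attained at ζᵢ = γᵢ(x) for every i ∈ I. -/
/-- The surrogate function `F(ζ,γ) = log(1+ζ) − ζ + (1+ζ)γ/(1+γ)`. -/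
noncomputable def Fsur (ζ γ : ℝ) : ℝ :=
  Real.log (1 + ζ) - ζ + (1 + ζ) * γ / (1 + γ)

lemma Fsur_self {g : ℝ} (hg : 0 ≤ g) : Fsur g g = Real.log (1 + g) := by
  have h : (1 : ℝ) + g ≠ 0 := by linarith
  rw [Fsur, mul_div_cancel_left₀ _ h]; ring

lemma Fsur_le {z g : ℝ} (hz : 0 ≤ z) (hg : 0 ≤ g) : Fsur z g ≤ Fsur g g := by
  have h1z : (0:ℝ) < 1 + z := by linarith
  have h1g : (0:ℝ) < 1 + g := by linarith
  have hlog : Real.log ((1 + z) / (1 + g)) ≤ (1 + z) / (1 + g) - 1 :=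
    Real.log_le_sub_one_of_pos (by positivity)
  rw [Real.log_div h1z.ne' h1g.ne'] at hlog
  rw [Fsur, Fsur]
  have hA : (1 + z) * g / (1 + g) - (1 + g) * g / (1 + g)
      = (z - g) * (g / (1 + g)) := by field_simp; ring
  have hd : (1 + z) / (1 + g) - 1 = (z - g) / (1 + g) := by field_simp; ring
  have h0 : (z - g) / (1 + g) + (z - g) * (g / (1 + g)) = z - g := by
    field_simp
  linarith [hlog, hd, hA, h0]

/-- For a nonempty set `S`, a finite index set `I`, and nonnegative
functions `γᵢ : S → ℝ`, the supremum over `x ∈ S` of `Σᵢ log(1+γᵢ(x))` equals the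
double supremum over `x ∈ S` and `ζ ∈ (ℝ≥0)^I` of `Σᵢ F(ζᵢ, γᵢ(x))`; moreover for each
fixed `x` the inner supremum over `ζ` is attained at `ζᵢ = γᵢ(x)`. -/
theorem stmt_2 {S : Type*} [Nonempty S] {I : Type*} [Fintype I]
    (γ : I → S → ℝ) (hγ : ∀ i x, 0 ≤ γ i x) :
    ((⨆ x : S, ∑ i, Real.log (1 + γ i x)) =
      ⨆ x : S, ⨆ ζ : I → NNReal, ∑ i, Fsur (ζ i) (γ i x)) ∧
    (∀ x : S, ∀ ζ : I → NNReal,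
      ∑ i, Fsur (ζ i) (γ i x) ≤ ∑ i, Fsur (γ i x) (γ i x)) ∧
    (∀ x : S, (⨆ ζ : I → NNReal, ∑ i, Fsur (ζ i) (γ i x)) =
      ∑ i, Fsur (γ i x) (γ i x)) := by
  have hle : ∀ x : S, ∀ ζ : I → NNReal,
      ∑ i, Fsur (ζ i) (γ i x) ≤ ∑ i, Fsur (γ i x) (γ i x) := by
    intro x ζ
    exact Finset.sum_le_sum fun i _ => Fsur_le (ζ i).coe_nonneg (hγ i x)
  have heq : ∀ x : S, (⨆ ζ : I → NNReal, ∑ i, Fsur (ζ i) (γ i x)) =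
      ∑ i, Fsur (γ i x) (γ i x) := by
    intro x
    apply le_antisymm
    · exact ciSup_le (hle x)
    · have hbdd : BddAbove (Set.range fun ζ : I → NNReal => ∑ i, Fsur (ζ i) (γ i x)) :=
        ⟨∑ i, Fsur (γ i x) (γ i x), Set.forall_mem_range.2 (hle x)⟩
      exact le_ciSup hbdd (fun i => ⟨γ i x, hγ i x⟩)
  refine ⟨?_, hle, heq⟩
  apply iSup_congr
  intro x
  rw [heq x]
  exact Finset.sum_congr rfl fun i _ => (Fsur_self (hγ i x)).symm
end

section
/- Let h, d ∈ ℂ^M be nonzero vectors, let P_D ≥ 0, σ² > 0, γ_th > 0, and P_C > 0 be real numbers, and set λ₁ = |hᴴ d|²/(‖h‖²‖d‖²), λ₂ = σ²/‖d‖², and γ̃ = σ² γ_th/‖h‖². Then the SINR condition P_C · hᴴ (P_D · d dᴴ + σ² I_M)⁻¹ h ≥ γ_th holds if and only if P_C ≥ γ̃ (P_D + λ₂)/((1−λ₁)P_D + λ₂). -/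
open Matrix

/-- Squared Euclidean norm of a complex vector. -/
noncomputable def nsq {M : ℕ} (h : Fin M → ℂ) : ℝ := ∑ i, Complex.normSq (h i)

lemma nsq_pos {M : ℕ} {h : Fin M → ℂ} (hh : h ≠ 0) : 0 < nsq h := by
  have hne : ∃ i, h i ≠ 0 := by
    by_contra hc
    push_neg at hc
    exact hh (funext hc)
  obtain ⟨i, hi⟩ := hne
  have : 0 < Complex.normSq (h i) := Complex.normSq_pos.mpr hi
  exact Finset.sum_pos' (fun j _ => Complex.normSq_nonneg _) ⟨i, Finset.mem_univ i, this⟩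

lemma dot_star_self {M : ℕ} (h : Fin M → ℂ) : star h ⬝ᵥ h = (nsq h : ℂ) := by
  simp only [dotProduct, Pi.star_apply, nsq]
  push_cast
  refine Finset.sum_congr rfl fun i _ => ?_
  rw [Complex.normSq_eq_conj_mul_self]
  rfl

lemma dot_star_swap {M : ℕ} (h d : Fin M → ℂ) :
    star d ⬝ᵥ h = (starRingEnd ℂ) (star h ⬝ᵥ d) := by
  simp only [dotProduct, Pi.star_apply, map_sum, _root_.map_mul]
  refine Finset.sum_congr rfl fun i _ => ?_
  simp [RCLike.star_def, mul_comm]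

lemma cauchy_nsq {M : ℕ} (h d : Fin M → ℂ) :
    Complex.normSq (star h ⬝ᵥ d) ≤ nsq h * nsq d := by
  let h' : EuclideanSpace ℂ (Fin M) := WithLp.toLp 2 h
  let d' : EuclideanSpace ℂ (Fin M) := WithLp.toLp 2 d
  have h1 : (inner ℂ h' d' : ℂ) = star h ⬝ᵥ d := by
    simp [h', d', PiLp.inner_apply, dotProduct, RCLike.star_def, mul_comm]
  have h2 : ‖h'‖ ^ 2 = nsq h := by
    rw [EuclideanSpace.norm_eq, Real.sq_sqrt (Finset.sum_nonneg fun i _ => sq_nonneg _)]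
    exact Finset.sum_congr rfl fun i _ => (Complex.sq_norm _).symm ▸ rfl
  have h3 : ‖d'‖ ^ 2 = nsq d := by
    rw [EuclideanSpace.norm_eq, Real.sq_sqrt (Finset.sum_nonneg fun i _ => sq_nonneg _)]
    exact Finset.sum_congr rfl fun i _ => (Complex.sq_norm _).symm ▸ rfl
  have := norm_inner_le_norm (𝕜 := ℂ) h' d'
  have hsq : ‖(inner ℂ h' d' : ℂ)‖ ^ 2 ≤ (‖h'‖ * ‖d'‖) ^ 2 := by
    apply sq_le_sq' _ this
    have : 0 ≤ ‖(inner ℂ h' d' : ℂ)‖ := norm_nonneg _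
    nlinarith [mul_nonneg (norm_nonneg h') (norm_nonneg d')]
  calc Complex.normSq (star h ⬝ᵥ d) = ‖(inner ℂ h' d' : ℂ)‖ ^ 2 := by
        rw [h1, ← Complex.sq_norm]
    _ ≤ (‖h'‖ * ‖d'‖) ^ 2 := hsq
    _ = nsq h * nsq d := by rw [mul_pow, h2, h3]

lemma vecMulVec_mul_vecMulVec {M : ℕ} (d : Fin M → ℂ) :
    vecMulVec d (star d) * vecMulVec d (star d) = ((nsq d : ℝ) : ℂ) • vecMulVec d (star d) := by
  ext i j
  simp only [Matrix.mul_apply, vecMulVec_apply, Matrix.smul_apply, smul_eq_mul]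
  rw [← dot_star_self d]
  simp only [dotProduct, Pi.star_apply, Finset.sum_mul]
  refine Finset.sum_congr rfl fun k _ => ?_
  ring

lemma vecMulVec_mulVec' {M : ℕ} (d h : Fin M → ℂ) :
    (vecMulVec d (star d)).mulVec h = (star d ⬝ᵥ h) • d := by
  ext i
  simp only [Matrix.mulVec, dotProduct, vecMulVec_apply, Pi.smul_apply, smul_eq_mul,
    Pi.star_apply]
  rw [Finset.sum_mul]
  refine Finset.sum_congr rfl fun k _ => ?_
  ring

/-- With nonzero `h, d ∈ ℂ^M`, `P_D ≥ 0`, `σ² > 0`, `γ_th > 0`, `P_C > 0`,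
`λ₁ = |hᴴd|²/(‖h‖²‖d‖²)`, `λ₂ = σ²/‖d‖²` and `γ̃ = σ²γ_th/‖h‖²`, the SINR condition
`P_C·hᴴ(P_D·ddᴴ + σ²I)⁻¹h ≥ γ_th` holds iff `P_C ≥ γ̃(P_D+λ₂)/((1−λ₁)P_D+λ₂)`. -/
theorem stmt_7 {M : ℕ} (h d : Fin M → ℂ) (hh : h ≠ 0) (hd : d ≠ 0)
    (PD σ2 γth PC : ℝ) (hPD : 0 ≤ PD) (hσ : 0 < σ2) (hγ : 0 < γth) (hPC : 0 < PC)
    (l1 l2 gt : ℝ)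
    (hl1 : l1 = ‖star h ⬝ᵥ d‖ ^ 2 / (nsq h * nsq d))
    (hl2 : l2 = σ2 / nsq d)
    (hgt : gt = σ2 * γth / nsq h) :
    γth ≤ PC *
        (star h ⬝ᵥ ((PD : ℂ) • Matrix.vecMulVec d (star d) +
          (σ2 : ℂ) • (1 : Matrix (Fin M) (Fin M) ℂ))⁻¹.mulVec h).re ↔
      gt * (PD + l2) / ((1 - l1) * PD + l2) ≤ PC := by
  have hH : 0 < nsq h := nsq_pos hh
  have hD : 0 < nsq d := nsq_pos hd
  set H := nsq h with hHdef
  set D := nsq d with hDdef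
  set T := Complex.normSq (star h ⬝ᵥ d) with hTdef
  have hT0 : 0 ≤ T := Complex.normSq_nonneg _
  have hCS : T ≤ H * D := cauchy_nsq h d
  set cR := σ2 + PD * D with hcRdef
  have hcR : 0 < cR := by positivity
  set N := H * σ2 + PD * (H * D - T) with hNdef
  have hN : 0 < N := by nlinarith
  set A := (PD : ℂ) • Matrix.vecMulVec d (star d) +
      (σ2 : ℂ) • (1 : Matrix (Fin M) (Fin M) ℂ) with hAdef
  set B := ((σ2⁻¹ : ℝ) : ℂ) • ((1 : Matrix (Fin M) (Fin M) ℂ) -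
      ((PD / cR : ℝ) : ℂ) • Matrix.vecMulVec d (star d)) with hBdef
  have hAvv : A * Matrix.vecMulVec d (star d) = ((cR : ℝ) : ℂ) • Matrix.vecMulVec d (star d) := by
    rw [hAdef, Matrix.add_mul, Matrix.smul_mul, Matrix.smul_mul,
      _root_.vecMulVec_mul_vecMulVec, Matrix.one_mul, smul_smul, ← add_smul]
    congr 1
    push_cast [hcRdef]
    ring
  have hAB : A * B = 1 := by
    rw [hBdef, Matrix.mul_smul, Matrix.mul_sub, Matrix.mul_one, Matrix.mul_smul, hAvv,
      smul_smul]
    have : ((PD / cR : ℝ) : ℂ) * ((cR : ℝ) : ℂ) = (PD : ℂ) := by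
      push_cast
      rw [div_mul_cancel₀]
      exact_mod_cast hcR.ne'
    rw [this, hAdef, add_sub_cancel_left, smul_smul]
    have : ((σ2⁻¹ : ℝ) : ℂ) * (σ2 : ℂ) = 1 := by
      push_cast
      rw [inv_mul_cancel₀]
      exact_mod_cast hσ.ne'
    rw [this, one_smul]
  have hinv : A⁻¹ = B := Matrix.inv_eq_right_inv hAB
  have hq : star h ⬝ᵥ A⁻¹.mulVec h = ((σ2⁻¹ * (H - PD / cR * T) : ℝ) : ℂ) := by
    rw [hinv, hBdef, Matrix.smul_mulVec, Matrix.sub_mulVec, Matrix.smul_mulVec,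
      Matrix.one_mulVec, vecMulVec_mulVec', dot_star_swap h d]
    rw [dotProduct_smul, dotProduct_sub, dotProduct_smul, dotProduct_smul, dot_star_self]
    have hconj : (starRingEnd ℂ) (star h ⬝ᵥ d) * (star h ⬝ᵥ d) = ((T : ℝ) : ℂ) := by
      rw [hTdef, Complex.normSq_eq_conj_mul_self]
    push_cast
    simp only [smul_eq_mul]
    rw [hconj, ← hHdef]
  rw [hq, Complex.ofReal_re]
  have hQval : PC * (σ2⁻¹ * (H - PD / cR * T)) = PC * N / (σ2 * cR) := by
    rw [hNdef, eq_div_iff (by positivity : (0:ℝ) < σ2 * cR).ne']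
    have h1 : σ2⁻¹ * (H - PD / cR * T) * (σ2 * cR) = H * σ2 + PD * (H * D - T) := by
      field_simp
      ring
    rw [mul_assoc, h1]
  have hden : (1 - l1) * PD + l2 = N / (H * D) := by
    rw [hl1, hl2, hNdef, hTdef, ← Complex.sq_norm]
    field_simp
    ring
  have hRHS : gt * (PD + l2) / ((1 - l1) * PD + l2) = σ2 * γth * cR / N := by
    rw [hden, hgt, hl2, hcRdef]
    field_simp
    ring
  rw [hQval, hRHS, le_div_iff₀ (by positivity), div_le_iff₀ hN]
  constructor <;> intro hx <;> nlinarith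
end

section
/- Let a, b, c, d > 0 be real numbers and define h(x) = log(1 + a x) + log(1 + b/(c x + d)) for x ≥ 0. Then for all real numbers 0 ≤ x₁ ≤ x ≤ x₂, one has h(x) ≤ max(h(x₁), h(x₂)); i.e., on every closed subinterval of [0, ∞) the maximum of h is attained at an endpoint. -/
/-- Helper: on a positive interval, `p*t + q/t` attains its max at an endpoint. -/
lemma aux_key_9 (p q t₁ t t₂ : ℝ) (hp : 0 < p) (h1 : 0 < t₁) (h12 : t₁ ≤ t) (h23 : t ≤ t₂) :
    p*t + q/t ≤ max (p*t₁ + q/t₁) (p*t₂ + q/t₂) := by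
  have ht : 0 < t := lt_of_lt_of_le h1 h12
  have ht2 : 0 < t₂ := lt_of_lt_of_le ht h23
  rcases le_or_gt (p*t*t₁) q with hq | hq
  · refine le_max_of_le_left ?_
    rw [← sub_nonneg]
    have e : p*t₁ + q/t₁ - (p*t + q/t) = ((t - t₁)*(q - p*t*t₁))/(t₁*t) := by
      field_simp; ring
    rw [e]
    exact div_nonneg (mul_nonneg (by linarith) (by linarith)) (by positivity)
  · refine le_max_of_le_right ?_
    rw [← sub_nonneg]
    have e : p*t₂ + q/t₂ - (p*t + q/t) = ((t₂ - t)*(p*t*t₂ - q))/(t*t₂) := by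
      field_simp; ring
    rw [e]
    have hq2 : q ≤ p*t*t₂ := le_trans hq.le
      (by have := mul_le_mul_of_nonneg_left (h12.trans h23) (mul_pos hp ht).le
          nlinarith)
    exact div_nonneg (mul_nonneg (by linarith) (by linarith)) (by positivity)

/-- For `a, b, c, d > 0` and `h(x) = log(1+ax) + log(1+b/(cx+d))`,
on every closed subinterval `[x₁, x₂] ⊆ [0,∞)` the maximum of `h` is attained at an
endpoint: `h(x) ≤ max(h(x₁), h(x₂))` whenever `0 ≤ x₁ ≤ x ≤ x₂`. -/
theorem stmt_9 (a b c d : ℝ) (ha : 0 < a) (hb : 0 < b) (hc : 0 < c) (hd : 0 < d)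
    (x₁ x x₂ : ℝ) (h1 : 0 ≤ x₁) (h2 : x₁ ≤ x) (h3 : x ≤ x₂) :
    Real.log (1 + a * x) + Real.log (1 + b / (c * x + d)) ≤
      max (Real.log (1 + a * x₁) + Real.log (1 + b / (c * x₁ + d)))
        (Real.log (1 + a * x₂) + Real.log (1 + b / (c * x₂ + d))) := by
  have hx : 0 ≤ x := le_trans h1 h2
  have hx2 : 0 ≤ x₂ := le_trans hx h3
  have ht1 : 0 < c*x₁ + d := by nlinarith
  have ht : 0 < c*x + d := by nlinarith
  have ht2 : 0 < c*x₂ + d := by nlinarith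
  -- positivity of factors
  have hA : ∀ y : ℝ, 0 ≤ y → 0 < 1 + a*y := fun y hy => by nlinarith
  have hB : ∀ y : ℝ, 0 < c*y + d → 0 < 1 + b/(c*y + d) := fun y hy => by positivity
  -- rewrite sums of logs as logs of products
  have hlog : ∀ y : ℝ, 0 ≤ y → 0 < c*y + d →
      Real.log (1 + a*y) + Real.log (1 + b/(c*y + d))
        = Real.log ((1 + a*y) * (1 + b/(c*y + d))) :=
    fun y hy hty => (Real.log_mul (ne_of_gt (hA y hy)) (ne_of_gt (hB y hty))).symm
  rw [hlog x hx ht, hlog x₁ h1 ht1, hlog x₂ hx2 ht2]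
  -- product formula
  have hP : ∀ y : ℝ, 0 < c*y + d →
      (1 + a*y) * (1 + b/(c*y + d))
        = (a*(c*y + d) + (a*b + c - a*d) + b*(c - a*d)/(c*y + d))/c := by
    intro y hy
    rw [eq_div_iff hc.ne']
    have hT : (c*y+d) * (c*y+d)⁻¹ = 1 := mul_inv_cancel₀ hy.ne'
    simp only [div_eq_mul_inv]
    linear_combination (a*b) * hT
  have key := aux_key_9 a (b*(c - a*d)) (c*x₁ + d) (c*x + d) (c*x₂ + d) ha ht1
    (by nlinarith) (by nlinarith)
  rcases le_max_iff.mp key with H | H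
  · refine le_max_of_le_left (Real.log_le_log (by positivity) ?_)
    rw [hP x ht, hP x₁ ht1]
    exact (div_le_div_iff_of_pos_right hc).mpr (by linarith)
  · refine le_max_of_le_right (Real.log_le_log (by positivity) ?_)
    rw [hP x ht, hP x₂ ht2]
    exact (div_le_div_iff_of_pos_right hc).mpr (by linarith)
end

section
/- Let α, β, λ₂ > 0 be real numbers and λ₁ ∈ [0,1], and define f(y) = log(1 + α (λ₂ + (1−λ₁) y)/(λ₂ + y)) + log(1 + β y) for y ≥ 0. Then for all real numbers 0 ≤ y₁ ≤ y ≤ y₂, one has f(y) ≤ max(f(y₁), f(y₂)); i.e., on every closed subinterval of [0, ∞) the maximum of f is attained at an endpoint. -/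
private lemma aux_stmt10 (α β l2 l1 : ℝ) (hα : 0 < α) (hβ : 0 < β) (hl2 : 0 < l2)
    (hl1a : 0 ≤ l1) (hl1b : l1 ≤ 1) (y z : ℝ) (hy : 0 ≤ y) (hz : 0 ≤ z)
    (hkey : (y - z) * ((1 + α * (1 - l1)) * β * (l2 + y) * (l2 + z)
      - l2 * α * l1 * (1 - β * l2)) ≤ 0) :
    Real.log (1 + α * (l2 + (1 - l1) * y) / (l2 + y)) + Real.log (1 + β * y) ≤
      Real.log (1 + α * (l2 + (1 - l1) * z) / (l2 + z)) + Real.log (1 + β * z) := by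
  have hdy : 0 < l2 + y := by linarith
  have hdz : 0 < l2 + z := by linarith
  have hpos : ∀ w : ℝ, 0 ≤ w → 0 < 1 + α * (l2 + (1 - l1) * w) / (l2 + w) := by
    intro w hw
    have hdw : 0 < l2 + w := by linarith
    have : 0 ≤ α * (l2 + (1 - l1) * w) / (l2 + w) := by
      apply div_nonneg _ hdw.le
      have : 0 ≤ (1 - l1) * w := mul_nonneg (by linarith) hw
      nlinarith
    linarith
  have hby : (0:ℝ) < 1 + β * y := by nlinarith
  have hbz : (0:ℝ) < 1 + β * z := by nlinarith
  have hxy := hpos y hy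
  have hxz := hpos z hz
  rw [← Real.log_mul (ne_of_gt hxy) (ne_of_gt hby),
      ← Real.log_mul (ne_of_gt hxz) (ne_of_gt hbz)]
  apply Real.log_le_log (by positivity)
  have ey : 1 + α * (l2 + (1 - l1) * y) / (l2 + y)
      = (l2 + y + α * (l2 + (1 - l1) * y)) / (l2 + y) := by
    field_simp
  have ez : 1 + α * (l2 + (1 - l1) * z) / (l2 + z)
      = (l2 + z + α * (l2 + (1 - l1) * z)) / (l2 + z) := by
    field_simp
  rw [ey, ez, div_mul_eq_mul_div, div_mul_eq_mul_div, div_le_div_iff₀ hdy hdz]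
  nlinarith [hkey]

/-- For `α, β, λ₂ > 0` and `λ₁ ∈ [0,1]`, with
`f(y) = log(1 + α(λ₂+(1−λ₁)y)/(λ₂+y)) + log(1+βy)`, on every closed subinterval
`[y₁, y₂] ⊆ [0,∞)` the maximum of `f` is attained at an endpoint:
`f(y) ≤ max(f(y₁), f(y₂))` whenever `0 ≤ y₁ ≤ y ≤ y₂`. -/
theorem stmt_10 (α β l2 : ℝ) (hα : 0 < α) (hβ : 0 < β) (hl2 : 0 < l2)
    (l1 : ℝ) (hl1 : l1 ∈ Set.Icc (0 : ℝ) 1)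
    (y₁ y y₂ : ℝ) (h1 : 0 ≤ y₁) (h2 : y₁ ≤ y) (h3 : y ≤ y₂) :
    Real.log (1 + α * (l2 + (1 - l1) * y) / (l2 + y)) + Real.log (1 + β * y) ≤
      max (Real.log (1 + α * (l2 + (1 - l1) * y₁) / (l2 + y₁)) + Real.log (1 + β * y₁))
        (Real.log (1 + α * (l2 + (1 - l1) * y₂) / (l2 + y₂)) + Real.log (1 + β * y₂)) := by
  obtain ⟨hl1a, hl1b⟩ := hl1
  have hy : 0 ≤ y := le_trans h1 h2
  have hy2 : 0 ≤ y₂ := le_trans hy h3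
  rcases le_or_gt ((1 + α * (1 - l1)) * β * (l2 + y) * (l2 + y₁))
      (l2 * α * l1 * (1 - β * l2)) with hc | hc
  · exact le_max_of_le_left (aux_stmt10 α β l2 l1 hα hβ hl2 hl1a hl1b y y₁ hy h1
      (mul_nonpos_of_nonneg_of_nonpos (by linarith) (by linarith)))
  · refine le_max_of_le_right (aux_stmt10 α β l2 l1 hα hβ hl2 hl1a hl1b y y₂ hy hy2
      (mul_nonpos_of_nonpos_of_nonneg (by linarith) ?_))
    have hP : 0 ≤ (1 + α * (1 - l1)) * β := by
      have : 0 ≤ α * (1 - l1) := mul_nonneg hα.le (by linarith)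
      positivity
    nlinarith [mul_nonneg (mul_nonneg hP (by linarith : (0:ℝ) ≤ l2 + y)) (sub_nonneg.2 (h2.trans h3))]
end

section
/- Let n ∈ ℕ, let ε₁,…,ε_n ∈ ℝ, r₁,…,r_n ∈ ℂ, v₁,…,v_n ∈ ℂ, and δ ∈ ℝ, and define g(μ) = Σᵢ εᵢ |(rᵢ + μ vᵢ)/(1 + μ εᵢ)|² − 2 Re( Σᵢ v̄ᵢ (rᵢ + μ vᵢ)/(1 + μ εᵢ) ) − δ. Then at every real μ satisfying 1 + μ εᵢ ≠ 0 for all i, g is differentiable with derivative g′(μ) = −2 Σᵢ |vᵢ − εᵢ rᵢ|² / (1 + μ εᵢ)³. -/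
lemma aux_term (ε : ℝ) (r v : ℂ) (μ : ℝ) (h : 1 + μ * ε ≠ 0) :
    HasDerivAt (fun t : ℝ =>
      ε * (‖(r + (t : ℂ) * v) / ((1 + t * ε : ℝ) : ℂ)‖) ^ 2 -
        2 * ((starRingEnd ℂ) v * ((r + (t : ℂ) * v) / ((1 + t * ε : ℝ) : ℂ))).re)
      (-2 * ((‖v - (ε : ℂ) * r‖) ^ 2 / (1 + μ * ε) ^ 3)) μ := by
  have h2 : (1 + μ * ε) ^ 2 ≠ 0 := pow_ne_zero _ h
  have hc : HasDerivAt (fun t : ℝ => 1 + t * ε) ε μ := by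
    simpa using ((hasDerivAt_id μ).mul_const ε).const_add 1
  have hc2 := hc.pow 2
  have hx : HasDerivAt (fun t : ℝ => r.re + t * v.re) v.re μ := by
    simpa using ((hasDerivAt_id μ).mul_const v.re).const_add r.re
  have hy : HasDerivAt (fun t : ℝ => r.im + t * v.im) v.im μ := by
    simpa using ((hasDerivAt_id μ).mul_const v.im).const_add r.im
  have hN := (hx.pow 2).add (hy.pow 2)
  have hM := (hx.const_mul v.re).add (hy.const_mul v.im)
  have hF := ((hN.const_mul ε).div hc2 h2).sub ((hM.div hc h).const_mul 2)
  have hcont : ContinuousAt (fun t : ℝ => 1 + t * ε) μ := by fun_prop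
  have hev : ∀ᶠ t in nhds μ, 1 + t * ε ≠ 0 := hcont.eventually_ne h
  have hfun : (fun t : ℝ =>
      ε * (‖(r + (t : ℂ) * v) / ((1 + t * ε : ℝ) : ℂ)‖) ^ 2 -
        2 * ((starRingEnd ℂ) v * ((r + (t : ℂ) * v) / ((1 + t * ε : ℝ) : ℂ))).re)
      =ᶠ[nhds μ] (fun t : ℝ =>
      ε * ((r.re + t * v.re) ^ 2 + (r.im + t * v.im) ^ 2) / (1 + t * ε) ^ 2 -
        2 * ((v.re * (r.re + t * v.re) + v.im * (r.im + t * v.im)) / (1 + t * ε))) := by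
    filter_upwards [hev] with t ht
    rw [← mul_div_assoc]
    simp only [Complex.sq_norm, Complex.normSq_div, Complex.normSq_ofReal, Complex.normSq_apply,
      Complex.div_ofReal_re, Complex.div_ofReal_im, Complex.mul_re, Complex.mul_im, Complex.add_re, Complex.add_im,
      Complex.ofReal_re, Complex.ofReal_im, Complex.conj_re, Complex.conj_im]
    field_simp
    ring
  have hval : -2 * ((‖v - (ε : ℂ) * r‖) ^ 2 / (1 + μ * ε) ^ 3) =
      ((ε * (↑2 * (r.re + μ * v.re) ^ (2 - 1) * v.re + ↑2 * (r.im + μ * v.im) ^ (2 - 1) * v.im)) *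
          (1 + μ * ε) ^ 2 -
        ε * ((r.re + μ * v.re) ^ 2 + (r.im + μ * v.im) ^ 2) *
          (↑2 * (1 + μ * ε) ^ (2 - 1) * ε)) / ((1 + μ * ε) ^ 2) ^ 2 -
      2 * (((v.re * v.re + v.im * v.im) * (1 + μ * ε) -
        (v.re * (r.re + μ * v.re) + v.im * (r.im + μ * v.im)) * ε) / (1 + μ * ε) ^ 2) := by
    simp only [Complex.sq_norm, Complex.normSq_apply, Complex.sub_re, Complex.sub_im,
      Complex.mul_re, Complex.mul_im, Complex.ofReal_re, Complex.ofReal_im]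
    norm_num
    field_simp
    ring
  rw [hval] at *
  exact hF.congr_of_eventuallyEq hfun

/-- With `g(μ) = Σᵢ εᵢ|(rᵢ+μvᵢ)/(1+μεᵢ)|² − 2Re(Σᵢ v̄ᵢ(rᵢ+μvᵢ)/(1+μεᵢ)) − δ`,
at every real `μ` with `1 + μεᵢ ≠ 0` for all `i`, `g` is differentiable with derivative
`g′(μ) = −2Σᵢ |vᵢ − εᵢrᵢ|²/(1+μεᵢ)³`. -/
theorem stmt_11 (n : ℕ) (ε : Fin n → ℝ) (r v : Fin n → ℂ) (δ : ℝ) (μ : ℝ)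
    (hμ : ∀ i, 1 + μ * ε i ≠ 0) :
    HasDerivAt
      (fun t : ℝ =>
        (∑ i, ε i * (‖(r i + (t : ℂ) * v i) / ((1 + t * ε i : ℝ) : ℂ)‖) ^ 2) -
          2 * (∑ i, (starRingEnd ℂ) (v i) *
            ((r i + (t : ℂ) * v i) / ((1 + t * ε i : ℝ) : ℂ))).re - δ)
      (-2 * ∑ i, (‖v i - (ε i : ℂ) * r i‖) ^ 2 / (1 + μ * ε i) ^ 3) μ := by
  have hsum : HasDerivAt
      (fun t : ℝ => ∑ i, (ε i * (‖(r i + (t : ℂ) * v i) / ((1 + t * ε i : ℝ) : ℂ)‖) ^ 2 -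
        2 * ((starRingEnd ℂ) (v i) * ((r i + (t : ℂ) * v i) / ((1 + t * ε i : ℝ) : ℂ))).re))
      (∑ i, -2 * ((‖v i - (ε i : ℂ) * r i‖) ^ 2 / (1 + μ * ε i) ^ 3)) μ :=
    HasDerivAt.fun_sum fun i _ => aux_term (ε i) (r i) (v i) μ (hμ i)
  have := hsum.sub_const δ
  convert this using 2
  · rfl
  · rfl
  · rw [Complex.re_sum, Finset.mul_sum, ← Finset.sum_sub_distrib]
  · rw [Finset.mul_sum]
end

section
/- Let n ∈ ℕ, ε₁,…,ε_n ∈ ℝ, r₁,…,r_n ∈ ℂ, v₁,…,v_n ∈ ℂ, δ ∈ ℝ, and define g(μ) = Σᵢ εᵢ |(rᵢ + μ vᵢ)/(1 + μ εᵢ)|² − 2 Re( Σᵢ v̄ᵢ (rᵢ + μ vᵢ)/(1 + μ εᵢ) ) − δ. Let J ⊆ ℝ be an interval on which 1 + μ εᵢ > 0 for all i and all μ ∈ J, and suppose vᵢ ≠ εᵢ rᵢ for at least one index i. Then g is strictly decreasing on J; in particular g has at most one zero in J. -/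
lemma key (ε t : ℝ) (r v : ℂ) (h : 0 < 1 + t * ε) :
    ε * (‖(r + (t:ℂ) * v) / ((1 + t*ε : ℝ):ℂ)‖)^2 -
      2 * ((starRingEnd ℂ) v * ((r + (t:ℂ)*v) / ((1+t*ε:ℝ):ℂ))).re
    = (-ε * ‖r‖ ^ 2 - 2 * ((starRingEnd ℂ) (v - (ε:ℂ)*r) * r).re)
      + ‖v - (ε:ℂ)*r‖ ^ 2 * (ε * (t/(1+t*ε))^2 - 2*(t/(1+t*ε))) := by
  have hne : (1+t*ε) ≠ 0 := ne_of_gt h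
  simp only [Complex.sq_norm, Complex.normSq_apply, Complex.div_re, Complex.div_im,
    Complex.add_re, Complex.add_im, Complex.mul_re, Complex.mul_im, Complex.sub_re,
    Complex.sub_im, Complex.ofReal_re, Complex.ofReal_im, Complex.conj_re, Complex.conj_im,
    Complex.normSq_ofReal]
  have hne2 : 1 + ε * t ≠ 0 := by rw [mul_comm]; exact hne
  field_simp
  ring

lemma phi_anti (ε a b : ℝ) (hab : a < b) (ha : 0 < 1 + a*ε) (hb : 0 < 1 + b*ε) :
    ε * (b/(1+b*ε))^2 - 2*(b/(1+b*ε)) < ε * (a/(1+a*ε))^2 - 2*(a/(1+a*ε)) := by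
  set s₁ := a/(1+a*ε) with hs1
  set s₂ := b/(1+b*ε) with hs2
  have h1 : s₁ < s₂ := by
    rw [hs1, hs2, div_lt_div_iff₀ ha hb]; nlinarith
  have h2 : ε * s₁ < 1 := by
    rw [hs1, show ε * (a / (1+a*ε)) = ε * a / (1+a*ε) by ring, div_lt_one ha]; linarith
  have h3 : ε * s₂ < 1 := by
    rw [hs2, show ε * (b / (1+b*ε)) = ε * b / (1+b*ε) by ring, div_lt_one hb]; linarith
  nlinarith


/-- With `g(μ) = Σᵢ εᵢ|(rᵢ+μvᵢ)/(1+μεᵢ)|² − 2Re(Σᵢ v̄ᵢ(rᵢ+μvᵢ)/(1+μεᵢ)) − δ`,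
if `J` is an interval on which `1 + μεᵢ > 0` for all `i`, and `vᵢ ≠ εᵢrᵢ` for some `i`,
then `g` is strictly decreasing on `J`; in particular, `g` has at most one zero in `J`. -/
theorem stmt_12 (n : ℕ) (ε : Fin n → ℝ) (r v : Fin n → ℂ) (δ : ℝ)
    (g : ℝ → ℝ)
    (hg : g = fun t : ℝ =>
        (∑ i, ε i * ‖(r i + (t : ℂ) * v i) / ((1 + t * ε i : ℝ) : ℂ)‖ ^ 2) -
          2 * (∑ i, (starRingEnd ℂ) (v i) *
            ((r i + (t : ℂ) * v i) / ((1 + t * ε i : ℝ) : ℂ))).re - δ)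
    (J : Set ℝ) (hJ : J.OrdConnected)
    (hpos : ∀ μ ∈ J, ∀ i, 0 < 1 + μ * ε i)
    (hvr : ∃ i, v i ≠ (ε i : ℂ) * r i) :
    StrictAntiOn g J ∧ {μ ∈ J | g μ = 0}.Subsingleton := by
  set C : Fin n → ℝ := fun i =>
    -ε i * ‖r i‖ ^ 2 - 2 * ((starRingEnd ℂ) (v i - (ε i:ℂ)*r i) * r i).re with hC
  set m : Fin n → ℝ := fun i => ‖v i - (ε i:ℂ)*r i‖ ^ 2 with hm
  set φ : Fin n → ℝ → ℝ := fun i t => ε i * (t/(1+t*ε i))^2 - 2*(t/(1+t*ε i)) with hφ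
  have heq : ∀ t ∈ J, g t = (∑ i, C i) + (∑ i, m i * φ i t) - δ := by
    intro t ht
    rw [hg]
    simp only [Complex.re_sum, Finset.mul_sum, ← Finset.sum_sub_distrib]
    rw [← Finset.sum_add_distrib]
    congr 1
    refine Finset.sum_congr rfl fun i _ => ?_
    exact key (ε i) t (r i) (v i) (hpos t ht i)
  have hanti : StrictAntiOn g J := by
    intro a ha b hb hab
    rw [heq a ha, heq b hb]
    have : (∑ i, m i * φ i b) < ∑ i, m i * φ i a := by
      obtain ⟨i₀, hi₀⟩ := hvr
      refine Finset.sum_lt_sum (fun i _ => ?_) ⟨i₀, Finset.mem_univ i₀, ?_⟩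
      · have := phi_anti (ε i) a b hab (hpos a ha i) (hpos b hb i)
        have hmi : 0 ≤ m i := by positivity
        exact mul_le_mul_of_nonneg_left (le_of_lt this) hmi
      · have := phi_anti (ε i₀) a b hab (hpos a ha i₀) (hpos b hb i₀)
        have hmi : 0 < m i₀ := by
          have : v i₀ - (ε i₀:ℂ)*r i₀ ≠ 0 := sub_ne_zero.mpr hi₀
          have := norm_pos_iff.mpr this
          positivity
        exact mul_lt_mul_of_pos_left this hmi
    linarith
  refine ⟨hanti, fun x hx y hy => ?_⟩
  obtain ⟨hxJ, hgx⟩ := hx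
  obtain ⟨hyJ, hgy⟩ := hy
  rcases lt_trichotomy x y with h | h | h
  · exact absurd (hanti hxJ hyJ h) (by rw [hgx, hgy]; exact lt_irrefl 0)
  · exact h
  · exact absurd (hanti hyJ hxJ h) (by rw [hgx, hgy]; exact lt_irrefl 0)
end
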